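/- Let G be a connected graph of first Betti number g and q a vertex of G. Every divisor of degree g-1 on G is chip-firing equivalent to a unique q-orientable divisor. -/

import Mathlib

/-- A finite multigraph on vertex set `V` with edge set `E`. -/
structure Multigraph (V E : Type) where
  ends : E → V × V

namespace Multigraph

variable {V E : Type} [Fintype V] [Fintype E] [DecidableEq V]

/-- The graph Laplacian as a group homomorphism on divisors. -/
def lapHom (G : Multigraph V E) : (V → ℤ) →+ (V → ℤ) where
  toFun f := fun v =>
    ∑ e : E,
      ((if (G.ends e).1 = v then f (G.ends e).1 - f (G.ends e).2 else 0) +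
       (if (G.ends e).2 = v then f (G.ends e).2 - f (G.ends e).1 else 0))
  map_zero' := by funext v; simp
  map_add' f g := by
    funext v
    simp only [Pi.add_apply, ← Finset.sum_add_distrib]
    refine Finset.sum_congr rfl fun e _ => ?_
    split_ifs <;> ring

/-- The simple graph underlying a multigraph. -/
def toSimple (G : Multigraph V E) : SimpleGraph V :=
  SimpleGraph.fromRel (fun v w => ∃ e, G.ends e = (v, w))

/-- Given an orientation `o : E → Bool` (`true` meaning the edge is directed from its
first to its second endpoint), the head of an edge. -/
def head (G : Multigraph V E) (o : E → Bool) (e : E) : V :=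
  if o e then (G.ends e).2 else (G.ends e).1

/-- The tail of an oriented edge. -/
def tail (G : Multigraph V E) (o : E → Bool) (e : E) : V :=
  if o e then (G.ends e).1 else (G.ends e).2

/-- An orientation is `q`-connected if every vertex is reachable from `q` by a
directed path. -/
def QConnected (G : Multigraph V E) (o : E → Bool) (q : V) : Prop :=
  ∀ v : V, Relation.ReflTransGen (fun a b => ∃ e, G.tail o e = a ∧ G.head o e = b) q v

/-- The in-degree of a vertex under an orientation. -/
def indeg (G : Multigraph V E) (o : E → Bool) (v : V) : ℕ :=
  (Finset.univ.filter fun e => G.head o e = v).card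

/-- A divisor `D` is `q`-orientable if `D(v) = indeg(v) - 1` for some `q`-connected
orientation. -/
def IsQOrientable (G : Multigraph V E) (q : V) (D : V → ℤ) : Prop :=
  ∃ o : E → Bool, G.QConnected o q ∧ ∀ v, D v = (G.indeg o v : ℤ) - 1

end Multigraph

/-!
Reversing a set `F` of arcs of an orientation `O` changes `D_O = orientationDivisor O` by
`∑_{e ∈ F} (tail e - head e)`. Reversing a directed path from `a` to `b` therefore adds `a - b`, while reversing all arcs that
enter a set `S` left by no arc subtracts the Laplacian of the indicator of `S` and so stays in
the same class. Repeating such cut reversals at the set reachable from `q` makes `O`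
`q`-connected; together with path reversals this reaches every class of degree `g - 1`.

For uniqueness, let `D_O - D_{O'} = Δ f` with both orientations `q`-connected, and let `S` be
the set where `f` is maximal. Summing over `S`, every edge leaving `S` contributes at least `1`
to `∑_S Δ f`, which forces every such edge to enter `S` in `O` and to leave `S` in `O'`. Then
`S` and its complement cannot both be reachable from `q`, unless `S` is everything and `Δ f = 0`.
-/

namespace Multigraph

variable {V E : Type}

section DirectedPaths

variable (t h : E → V)

def boundary [DecidableEq V] (F : Finset E) : V → ℤ :=
  ∑ e ∈ F, (Pi.single (t e) 1 - Pi.single (h e) 1)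

/-- A walk from the head of `e` can be cut short after its last use of `e`. -/
theorem reflTransGen_erase [DecidableEq E] {A : Finset E} {e : E} {b : V}
    (hb : Relation.ReflTransGen (fun x y => ∃ e' ∈ A, t e' = x ∧ h e' = y) (h e) b) :
    Relation.ReflTransGen (fun x y => ∃ e' ∈ A.erase e, t e' = x ∧ h e' = y) (h e) b := by
  induction hb with
  | refl => exact .refl
  | tail _ hstep ih =>
    obtain ⟨e', he', rfl, rfl⟩ := hstep
    by_cases hee' : e' = e
    · subst hee'
      exact .refl
    · exact ih.tail ⟨e', Finset.mem_erase.mpr ⟨hee', he'⟩, rfl, rfl⟩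

theorem exists_boundary_eq_of_reflTransGen [DecidableEq V] [DecidableEq E] (A : Finset E)
    {a b : V} (hab : Relation.ReflTransGen (fun x y => ∃ e ∈ A, t e = x ∧ h e = y) a b) :
    ∃ F ⊆ A, boundary t h F = Pi.single a 1 - Pi.single b 1 := by
  induction A using Finset.strongInduction generalizing a with
  | H A ih =>
    rcases hab.cases_head with rfl | ⟨c, ⟨e, he, rfl, rfl⟩, hcb⟩
    · exact ⟨∅, Finset.empty_subset _, by simp [boundary]⟩
    · obtain ⟨F, hF, hFb⟩ := ih _ (Finset.erase_ssubset he) (reflTransGen_erase t h hcb)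
      refine ⟨insert e F, Finset.insert_subset he (hF.trans (Finset.erase_subset _ _)), ?_⟩
      rw [boundary, Finset.sum_insert fun heF => Finset.notMem_erase e A (hF heF), ← boundary,
        hFb, sub_add_sub_cancel]

end DirectedPaths

section Orientations

variable (G : Multigraph V E)

def orientationDivisor [Fintype E] [DecidableEq V] (o : E → Bool) : V → ℤ :=
  fun v => (G.indeg o v : ℤ) - 1

def Arc (o : E → Bool) (a b : V) : Prop := ∃ e, G.tail o e = a ∧ G.head o e = b

def reverse [DecidableEq E] (F : Finset E) (o : E → Bool) : E → Bool :=
  fun e => if e ∈ F then !o e else o e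

open Classical in
noncomputable def reachSet [Fintype V] (o : E → Bool) (q : V) : Finset V :=
  {v | Relation.ReflTransGen (G.Arc o) q v}

variable {G}

theorem tail_head_eq_ends_or_swap (o : E → Bool) (e : E) :
    (G.tail o e = (G.ends e).1 ∧ G.head o e = (G.ends e).2) ∨
      (G.tail o e = (G.ends e).2 ∧ G.head o e = (G.ends e).1) := by
  cases ho : o e <;> simp [tail, head, ho]

theorem indeg_eq_sum [Fintype E] [DecidableEq V] (o : E → Bool) (v : V) :
    (G.indeg o v : ℤ) = ∑ e, if G.head o e = v then 1 else 0 :=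
  Finset.natCast_card_filter _ _

theorem isQOrientable_iff [Fintype E] [DecidableEq V] {q : V} {D : V → ℤ} :
    G.IsQOrientable q D ↔ ∃ o, G.QConnected o q ∧ G.orientationDivisor o = D :=
  exists_congr fun _ => and_congr_right' ⟨fun h => (funext h).symm, fun h v => by rw [← h]; rfl⟩

theorem QConnected.forall_of_closed {o : E → Bool} {q : V} (ho : G.QConnected o q)
    {P : V → Prop} (hP : ∀ e, P (G.tail o e) → P (G.head o e)) (hq : P q) (v : V) : P v := by
  induction ho v with
  | refl => exact hq
  | tail _ hxy ih =>
    obtain ⟨e, rfl, rfl⟩ := hxy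
    exact hP e ih

theorem mem_reachSet [Fintype V] {o : E → Bool} {q v : V} :
    v ∈ G.reachSet o q ↔ Relation.ReflTransGen (G.Arc o) q v := by
  simp [reachSet]

theorem head_mem_reachSet [Fintype V] {o : E → Bool} {q : V} {e : E}
    (he : G.tail o e ∈ G.reachSet o q) : G.head o e ∈ G.reachSet o q :=
  mem_reachSet.mpr ((mem_reachSet.mp he).tail ⟨e, rfl, rfl⟩)

theorem exists_arc_into_of_connected (hconn : G.toSimple.Connected) (o : E → Bool)
    {S : Finset V} (hS : ∀ e, G.tail o e ∈ S → G.head o e ∈ S) {a b : V} (ha : a ∈ S)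
    (hb : b ∉ S) : ∃ e, G.tail o e ∉ S ∧ G.head o e ∈ S := by
  obtain ⟨p⟩ := hconn.preconnected a b
  obtain ⟨d, -, hd₁, hd₂⟩ := p.exists_boundary_dart S ha hb
  obtain ⟨-, ⟨e, he⟩ | ⟨e, he⟩⟩ := (SimpleGraph.fromRel_adj _ _ _).mp d.adj <;>
  · refine ⟨e, ?_⟩
    have hSe := hS e
    rcases tail_head_eq_ends_or_swap (G := G) o e with ⟨ht, hh⟩ | ⟨ht, hh⟩ <;>
      simp only [he] at ht hh <;> rw [ht, hh] at hSe ⊢ <;> simp_all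

variable [DecidableEq E] {F : Finset E} {o : E → Bool} {e : E}

theorem tail_reverse_of_mem (he : e ∈ F) : G.tail (reverse F o) e = G.head o e := by
  cases ho : o e <;> simp [tail, head, reverse, he, ho]

theorem head_reverse_of_mem (he : e ∈ F) : G.head (reverse F o) e = G.tail o e := by
  cases ho : o e <;> simp [tail, head, reverse, he, ho]

theorem tail_reverse_of_notMem (he : e ∉ F) : G.tail (reverse F o) e = G.tail o e := by
  simp [tail, reverse, he]

theorem head_reverse_of_notMem (he : e ∉ F) : G.head (reverse F o) e = G.head o e := by
  simp [head, reverse, he]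

end Orientations

variable [Fintype E] [DecidableEq V] {G : Multigraph V E}

theorem orientationDivisor_reverse [DecidableEq E] (F : Finset E) (o : E → Bool) :
    G.orientationDivisor (reverse F o) =
      G.orientationDivisor o + boundary (G.tail o) (G.head o) F := by
  ext v
  have hedge : ∀ e, (if G.head (reverse F o) e = v then (1 : ℤ) else 0) =
      (if G.head o e = v then 1 else 0) +
        if e ∈ F then (Pi.single (G.tail o e) 1 - Pi.single (G.head o e) 1 : V → ℤ) v
        else 0 := by
    intro e
    by_cases he : e ∈ F
    · simp only [head_reverse_of_mem he, he, Pi.sub_apply, Pi.single_apply, eq_comm (a := v)]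
      split_ifs <;> simp
    · simp [head_reverse_of_notMem he, he]
  simp only [orientationDivisor, indeg_eq_sum, hedge, Finset.sum_add_distrib, Pi.add_apply,
    boundary, Finset.sum_apply, ← Finset.sum_filter, Finset.filter_mem_eq_inter, Finset.univ_inter]
  ring

theorem sum_orientationDivisor [Fintype V] (o : E → Bool) :
    ∑ v, G.orientationDivisor o v = Fintype.card E - Fintype.card V := by
  simp only [orientationDivisor, Finset.sum_sub_distrib, indeg_eq_sum]
  rw [Finset.sum_comm]
  simp

theorem sum_indeg (o : E → Bool) (S : Finset V) :
    ∑ v ∈ S, (G.indeg o v : ℤ) = ∑ e, if G.head o e ∈ S then 1 else 0 := by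
  simp only [indeg_eq_sum]
  rw [Finset.sum_comm]
  simp only [Finset.sum_ite_eq]

theorem lapHom_apply_eq_sum (o : E → Bool) (f : V → ℤ) (v : V) :
    G.lapHom f v = ∑ e,
      ((if G.tail o e = v then f (G.tail o e) - f (G.head o e) else 0) +
        (if G.head o e = v then f (G.head o e) - f (G.tail o e) else 0)) := by
  refine Finset.sum_congr rfl fun e _ => ?_
  rcases tail_head_eq_ends_or_swap (G := G) o e with ⟨ht, hh⟩ | ⟨ht, hh⟩ <;> rw [ht, hh]
  exact add_comm _ _

theorem lapHom_const (c : ℤ) : G.lapHom (fun _ => c) = 0 := by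
  ext v
  simp [lapHom]

theorem sum_lapHom_apply (o : E → Bool) (f : V → ℤ) (S : Finset V) :
    ∑ v ∈ S, G.lapHom f v = ∑ e,
      ((if G.tail o e ∈ S then f (G.tail o e) - f (G.head o e) else 0) +
        (if G.head o e ∈ S then f (G.head o e) - f (G.tail o e) else 0)) := by
  simp only [lapHom_apply_eq_sum o]
  rw [Finset.sum_comm]
  simp only [Finset.sum_add_distrib, Finset.sum_ite_eq]

theorem boundary_enteringArcs [DecidableEq E] {o : E → Bool} {S : Finset V}
    (hS : ∀ e, G.tail o e ∈ S → G.head o e ∈ S) :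
    boundary (G.tail o) (G.head o) {e | G.tail o e ∉ S ∧ G.head o e ∈ S} =
      -G.lapHom (fun v => if v ∈ S then 1 else 0) := by
  ext v
  simp only [boundary, Finset.sum_filter, Finset.sum_apply, Pi.neg_apply,
    lapHom_apply_eq_sum o, ← Finset.sum_neg_distrib]
  refine Finset.sum_congr rfl fun e _ => ?_
  simp only [Pi.sub_apply, Pi.single_apply, eq_comm (a := v)]
  by_cases ht : G.tail o e ∈ S
  · simp [ht, hS e ht]
  · by_cases hh : G.head o e ∈ S
    · simp [ht, hh]
      split_ifs <;> simp
    · simp [ht, hh]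

theorem exists_orientationDivisor_eq_of_reflTransGen {o : E → Bool} {a b : V}
    (hab : Relation.ReflTransGen (G.Arc o) a b) :
    ∃ o', G.orientationDivisor o' = G.orientationDivisor o + Pi.single a 1 - Pi.single b 1 := by
  classical
  obtain ⟨F, -, hF⟩ := exists_boundary_eq_of_reflTransGen (G.tail o) (G.head o) Finset.univ
    (Relation.ReflTransGen.mono (fun _ _ ⟨e, he⟩ => ⟨e, Finset.mem_univ e, he⟩) _ _ hab)
  exact ⟨reverse F o, by rw [orientationDivisor_reverse, hF, add_sub_assoc]⟩

variable [Fintype V]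

theorem argmax_closed_of_lapHom_eq_sub {f : V → ℤ} {o o' : E → Bool}
    (hf : G.lapHom f = G.orientationDivisor o - G.orientationDivisor o') {M : ℤ}
    (hM : ∀ v, f v ≤ M) (e : E) :
    (f (G.tail o e) = M → f (G.head o e) = M) ∧ (f (G.head o' e) = M → f (G.tail o' e) = M) := by
  set S : Finset V := {v | f v = M}
  set L : E → ℤ := fun e =>
    (if G.tail o e ∈ S then f (G.tail o e) - f (G.head o e) else 0) +
      (if G.head o e ∈ S then f (G.head o e) - f (G.tail o e) else 0)
  set R : E → ℤ := fun e =>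
    (if G.head o e ∈ S then 1 else 0) - (if G.head o' e ∈ S then 1 else 0)
  set defect : E → ℤ := fun e =>
    (if G.tail o e ∈ S ∧ G.head o e ∉ S then 1 else 0) +
      (if G.head o' e ∈ S ∧ G.tail o' e ∉ S then 1 else 0)
  have hLR : ∑ e, L e = ∑ e, R e := by
    rw [← sum_lapHom_apply, hf]
    simp only [Pi.sub_apply, orientationDivisor, sub_sub_sub_cancel_right, Finset.sum_sub_distrib,
      sum_indeg, R]
  have hedge : ∀ e, defect e ≤ L e - R e := by
    intro e
    have hx := hM (G.ends e).1
    have hy := hM (G.ends e).2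
    rcases tail_head_eq_ends_or_swap (G := G) o e with ⟨h₁, h₂⟩ | ⟨h₁, h₂⟩ <;>
    rcases tail_head_eq_ends_or_swap (G := G) o' e with ⟨h₃, h₄⟩ | ⟨h₃, h₄⟩ <;>
    simp only [defect, L, R, S, h₁, h₂, h₃, h₄, Finset.mem_filter, Finset.mem_univ,
      true_and] <;> split_ifs <;> omega
  have hdefect : defect e ≤ 0 := calc
    defect e ≤ ∑ e, defect e :=
      Finset.single_le_sum (fun e _ => by positivity) (Finset.mem_univ e)
    _ ≤ ∑ e, (L e - R e) := Finset.sum_le_sum fun e _ => hedge e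
    _ = 0 := by rw [Finset.sum_sub_distrib, hLR, sub_self]
  simp only [defect, S, Finset.mem_filter, Finset.mem_univ, true_and] at hdefect
  split_ifs at hdefect <;> omega

theorem orientationDivisor_eq_of_sub_mem_range {o o' : E → Bool} {q : V}
    (ho : G.QConnected o q) (ho' : G.QConnected o' q)
    (h : G.orientationDivisor o - G.orientationDivisor o' ∈ G.lapHom.range) :
    G.orientationDivisor o = G.orientationDivisor o' := by
  obtain ⟨f, hf⟩ := h
  obtain ⟨v₀, -, hv₀⟩ := Finset.exists_max_image Finset.univ f ⟨q, Finset.mem_univ q⟩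
  have hclosed := argmax_closed_of_lapHom_eq_sub hf fun v => hv₀ v (Finset.mem_univ v)
  by_cases hq : f q = f v₀
  · have hconst : f = fun _ => f v₀ :=
      funext (ho.forall_of_closed (fun e => (hclosed e).1) hq)
    rw [← sub_eq_zero, ← hf, hconst, lapHom_const]
  · exact absurd rfl (ho'.forall_of_closed (P := (f · ≠ f v₀))
      (fun e => mt (hclosed e).2) hq v₀)

theorem exists_reachSet_ssubset (hconn : G.toSimple.Connected) (o : E → Bool) (q : V)
    (hne : G.reachSet o q ≠ Finset.univ) :
    ∃ o', G.reachSet o q ⊂ G.reachSet o' q ∧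
      G.orientationDivisor o' - G.orientationDivisor o ∈ G.lapHom.range := by
  classical
  set S := G.reachSet o q
  have hS : ∀ e, G.tail o e ∈ S → G.head o e ∈ S := fun e => head_mem_reachSet
  set F : Finset E := {e | G.tail o e ∉ S ∧ G.head o e ∈ S}
  obtain ⟨w, hw⟩ : ∃ w, w ∉ S := by simpa [Finset.eq_univ_iff_forall] using hne
  obtain ⟨e, heS⟩ := exists_arc_into_of_connected hconn o hS (mem_reachSet.mpr .refl) hw
  have hsub : S ⊆ G.reachSet (reverse F o) q := by
    intro v hv
    refine mem_reachSet.mpr ?_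
    induction mem_reachSet.mp hv with
    | refl => exact .refl
    | @tail x y hqx hxy ih =>
      obtain ⟨e', rfl, rfl⟩ := hxy
      have hx : G.tail o e' ∈ S := mem_reachSet.mpr hqx
      have he' : e' ∉ F := by simp [F, hx]
      exact (ih hx).tail ⟨e', tail_reverse_of_notMem he', head_reverse_of_notMem he'⟩
  have heF : e ∈ F := by simp [F, heS]
  have htail : G.tail o e ∈ G.reachSet (reverse F o) q := by
    have h := head_mem_reachSet (G := G) (o := reverse F o) (q := q) (e := e)
    rw [tail_reverse_of_mem heF, head_reverse_of_mem heF] at h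
    exact h (hsub heS.2)
  refine ⟨reverse F o, (Finset.ssubset_iff_of_subset hsub).mpr ⟨_, htail, heS.1⟩, ?_⟩
  rw [orientationDivisor_reverse, boundary_enteringArcs hS, add_sub_cancel_left, ← map_neg]
  exact ⟨_, rfl⟩

theorem exists_qConnected_sub_mem_range (hconn : G.toSimple.Connected) (q : V)
    (o : E → Bool) : ∃ o', G.QConnected o' q ∧
      G.orientationDivisor o' - G.orientationDivisor o ∈ G.lapHom.range := by
  by_cases hall : G.reachSet o q = Finset.univ
  · exact ⟨o, fun v => mem_reachSet.mp (hall ▸ Finset.mem_univ v), by simp⟩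
  · obtain ⟨o₁, hlt, h₁⟩ := exists_reachSet_ssubset hconn o q hall
    obtain ⟨o', hq, h'⟩ := exists_qConnected_sub_mem_range hconn q o₁
    refine ⟨o', hq, ?_⟩
    simpa using add_mem h' h₁
termination_by (G.reachSet o q)ᶜ.card
decreasing_by exact Finset.card_lt_card (Finset.compl_ssubset_compl.mpr hlt)

theorem exists_orientationDivisor_add_single_sub_single (hconn : G.toSimple.Connected)
    (o : E → Bool) (a b : V) : ∃ o', G.orientationDivisor o' -
      (G.orientationDivisor o + Pi.single a 1 - Pi.single b 1) ∈ G.lapHom.range := by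
  obtain ⟨o₁, ha, h₁⟩ := exists_qConnected_sub_mem_range hconn a o
  obtain ⟨o₂, h₂⟩ := exists_orientationDivisor_eq_of_reflTransGen (ha b)
  refine ⟨o₂, ?_⟩
  convert h₁ using 1
  rw [h₂]
  abel

theorem exists_orientationDivisor_add_of_sum_eq_zero (hconn : G.toSimple.Connected)
    {d : V → ℤ} (hd : ∑ v, d v = 0) (o : E → Bool) :
    ∃ o', G.orientationDivisor o' - (G.orientationDivisor o + d) ∈ G.lapHom.range := by
  let P : AddSubmonoid (V → ℤ) :=
    { carrier := {d | ∀ o, ∃ o', G.orientationDivisor o' - (G.orientationDivisor o + d) ∈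
        G.lapHom.range}
      zero_mem' := fun o => ⟨o, by simp⟩
      add_mem' := fun {d₁ d₂} h₁ h₂ o => by
        obtain ⟨o₁, ho₁⟩ := h₁ o
        obtain ⟨o₂, ho₂⟩ := h₂ o₁
        refine ⟨o₂, ?_⟩
        convert add_mem ho₂ ho₁ using 1
        abel }
  have hP : ∀ a b, Pi.single a 1 - Pi.single b 1 ∈ P := fun a b o => by
    simpa only [add_sub_assoc] using exists_orientationDivisor_add_single_sub_single hconn o a b
  have hzsmul : ∀ (n : ℤ) a b, n • (Pi.single a 1 - Pi.single b 1 : V → ℤ) ∈ P := by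
    intro n a b
    obtain ⟨k, rfl | rfl⟩ := Int.eq_nat_or_neg n
    · rw [natCast_zsmul]
      exact nsmul_mem (hP a b) k
    · rw [neg_smul, ← smul_neg, neg_sub, natCast_zsmul]
      exact nsmul_mem (hP b a) k
  obtain ⟨q⟩ := hconn.nonempty
  have hdecomp : d = ∑ v, d v • (Pi.single v 1 - Pi.single q 1 : V → ℤ) := by
    ext w
    simp [Finset.sum_apply, Pi.single_apply, smul_sub, hd]
  have hdP : d ∈ P := hdecomp ▸ sum_mem fun v _ => hzsmul (d v) v q
  exact hdP o

theorem exists_qConnected_sub_orientationDivisor_mem_range (hconn : G.toSimple.Connected)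
    (q : V) {D : V → ℤ} (hdeg : ∑ v, D v = (Fintype.card E : ℤ) - Fintype.card V) :
    ∃ o, G.QConnected o q ∧ D - G.orientationDivisor o ∈ G.lapHom.range := by
  let o₀ : E → Bool := fun _ => true
  obtain ⟨o₁, h₁⟩ := exists_orientationDivisor_add_of_sum_eq_zero hconn
    (d := D - G.orientationDivisor o₀)
    (by simp [Finset.sum_sub_distrib, hdeg, sum_orientationDivisor]) o₀
  obtain ⟨o₂, hq, h₂⟩ := exists_qConnected_sub_mem_range hconn q o₁
  refine ⟨o₂, hq, ?_⟩
  convert neg_mem (add_mem h₂ h₁) using 1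
  abel

end Multigraph

open Multigraph in
/-- Let `G` be a connected multigraph with first Betti number
`g = |E| - |V| + 1` and `q` a vertex. Every divisor of degree `g - 1` is chip-firing
equivalent to a unique `q`-orientable divisor. -/
theorem unique_q_orientable_equiv {V E : Type} [Fintype V] [Fintype E] [DecidableEq V]
    (G : Multigraph V E) (hconn : G.toSimple.Connected) (q : V) (D : V → ℤ)
    (hdeg : ∑ v, D v = (Fintype.card E : ℤ) - (Fintype.card V : ℤ)) :
    ∃! D' : V → ℤ, G.IsQOrientable q D' ∧ D - D' ∈ G.lapHom.range := by
  obtain ⟨o, hq, hD⟩ := exists_qConnected_sub_orientationDivisor_mem_range hconn q hdeg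
  refine ⟨G.orientationDivisor o, ⟨isQOrientable_iff.mpr ⟨o, hq, rfl⟩, hD⟩, ?_⟩
  rintro _ ⟨hD', hDD'⟩
  obtain ⟨o', hq', rfl⟩ := isQOrientable_iff.mp hD'
  refine orientationDivisor_eq_of_sub_mem_range hq' hq ?_
  convert sub_mem hD hDD' using 1
  abel
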